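/- arXiv:1905.10737 — 5 statements merged into one kernel-verified Lean document; each statement's English description precedes it below -/
import Mathlib

section
/- For all real parameters σ > 0, x₀ > 0, t₀ ∈ ℝ, the complex-valued function of (k,t) ∈ ℝ × ℝ defined for t ≥ t₀ by P̂(k,t) = exp( (−i·k·x₀) / (1 + (i·k·σ²/2)·(t − t₀)) ) satisfies, for every k ∈ ℝ and every t > t₀, the partial differential equation ∂P̂/∂t (k,t) = (−i·σ²·k²/2) · ∂P̂/∂k (k,t), together with the initial condition P̂(k,t₀) = exp(−i·k·x₀) for all k ∈ ℝ and the normalization P̂(0,t) = 1 for all t ≥ t₀. -/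
open Complex

/-- The Fourier transform `P̂(k,t) = exp((-i k x₀)/(1 + (i k σ²/2)(t - t₀)))` of the
Feller diffusion transition density satisfies the Fourier-transformed Fokker–Planck
equation `∂P̂/∂t = (-i σ² k²/2) ∂P̂/∂k`, the initial condition
`P̂(k,t₀) = exp(-i k x₀)`, and the normalization `P̂(0,t) = 1`. -/
theorem feller_fourier_transform_solution (σ x₀ t₀ : ℝ) (hσ : 0 < σ) (hx₀ : 0 < x₀) :
    let P : ℝ → ℝ → ℂ := fun k t =>
      Complex.exp ((-Complex.I * k * x₀) / (1 + Complex.I * k * σ ^ 2 / 2 * (t - t₀)))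
    (∀ (k t : ℝ), t₀ < t →
        deriv (fun τ : ℝ => P k τ) t
          = (-Complex.I * σ ^ 2 * k ^ 2 / 2) * deriv (fun κ : ℝ => P κ t) k) ∧
    (∀ k : ℝ, P k t₀ = Complex.exp (-Complex.I * k * x₀)) ∧
    (∀ t : ℝ, t₀ ≤ t → P 0 t = 1) := by
  intro P
  refine ⟨?_, ?_, ?_⟩
  · intro k t ht
    -- denominator nonzero
    have hD : ∀ κ : ℝ, (1 : ℂ) + Complex.I * κ * σ ^ 2 / 2 * ((t:ℂ) - t₀) ≠ 0 := by
      intro κ h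
      have e : (1 : ℂ) + Complex.I * κ * σ ^ 2 / 2 * ((t:ℂ) - t₀)
          = (1 : ℂ) + ((κ * σ ^ 2 / 2 * (t - t₀) : ℝ) : ℂ) * Complex.I := by
        push_cast; ring
      rw [e] at h
      have := congrArg Complex.re h
      simp only [Complex.add_re, Complex.mul_re, Complex.ofReal_re, Complex.ofReal_im,
        Complex.I_re, Complex.I_im, Complex.one_re, Complex.zero_re] at this
      norm_num at this
    set D : ℂ := 1 + Complex.I * k * σ ^ 2 / 2 * ((t:ℂ) - t₀) with hDdef
    have hD0 : D ≠ 0 := hD k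
    -- t-derivative
    have h1 : HasDerivAt (fun z : ℂ => (1 : ℂ) + Complex.I * k * σ ^ 2 / 2 * (z - t₀))
        (Complex.I * k * σ ^ 2 / 2) (t : ℂ) := by
      simpa using (((hasDerivAt_id ((t:ℂ))).sub_const (t₀:ℂ)).const_mul
        (Complex.I * k * σ ^ 2 / 2)).const_add 1
    have h2 : HasDerivAt (fun z : ℂ =>
        (-Complex.I * k * x₀) / (1 + Complex.I * k * σ ^ 2 / 2 * (z - t₀)))
        ((0 * D - (-Complex.I * k * x₀) * (Complex.I * k * σ ^ 2 / 2)) / D ^ 2) (t : ℂ) :=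
      (hasDerivAt_const _ _).div h1 hD0
    have h3 := (h2.cexp).comp_ofReal
    have hkt : HasDerivAt (fun τ : ℝ => P k τ)
        (Complex.exp ((-Complex.I * k * x₀) / D) *
          ((0 * D - (-Complex.I * k * x₀) * (Complex.I * k * σ ^ 2 / 2)) / D ^ 2)) t := h3
    -- k-derivative
    have h4 : HasDerivAt (fun z : ℂ => -Complex.I * z * x₀) (-Complex.I * x₀) (k : ℂ) := by
      have := ((hasDerivAt_id ((k:ℂ))).const_mul (-Complex.I)).mul_const (x₀ : ℂ)
      simpa [mul_assoc, mul_comm] using this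
    have h5 : HasDerivAt (fun z : ℂ => (1 : ℂ) + Complex.I * z * σ ^ 2 / 2 * ((t:ℂ) - t₀))
        (Complex.I * σ ^ 2 / 2 * ((t:ℂ) - t₀)) (k : ℂ) := by
      have h := (hasDerivAt_id ((k:ℂ))).const_mul (Complex.I * σ ^ 2 / 2 * ((t:ℂ) - t₀))
      have : HasDerivAt (fun z : ℂ => Complex.I * σ ^ 2 / 2 * ((t:ℂ) - t₀) * z)
          (Complex.I * σ ^ 2 / 2 * ((t:ℂ) - t₀)) (k : ℂ) := by simpa using h
      have := this.const_add (1 : ℂ)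
      have e : (fun z : ℂ => (1 : ℂ) + Complex.I * z * σ ^ 2 / 2 * ((t:ℂ) - t₀))
          = (fun z : ℂ => 1 + Complex.I * σ ^ 2 / 2 * ((t:ℂ) - t₀) * z) := by
        funext z; ring
      rw [e]; exact this
    have h6 : HasDerivAt (fun z : ℂ =>
        (-Complex.I * z * x₀) / (1 + Complex.I * z * σ ^ 2 / 2 * ((t:ℂ) - t₀)))
        (((-Complex.I * x₀) * D - (-Complex.I * k * x₀) * (Complex.I * σ ^ 2 / 2 * ((t:ℂ) - t₀))) / D ^ 2)
        (k : ℂ) := h4.div h5 hD0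
    have h7 := (h6.cexp).comp_ofReal
    have hkk : HasDerivAt (fun κ : ℝ => P κ t)
        (Complex.exp ((-Complex.I * k * x₀) / D) *
          (((-Complex.I * x₀) * D - (-Complex.I * k * x₀) * (Complex.I * σ ^ 2 / 2 * ((t:ℂ) - t₀))) / D ^ 2)) k := h7
    rw [hkt.deriv, hkk.deriv]
    have hI : (Complex.I : ℂ) ^ 2 = -1 := Complex.I_sq
    field_simp
    ring_nf
    rw [hDdef]; ring
  · intro k
    simp only [P]
    norm_num
  · intro t ht
    simp only [P]
    norm_num
end

section
/- Let λ > 0 be real. Then the function x ↦ (e^{−x/2}/x) · ∑_{n=1}^{∞} ( (λx/4)^n / (n!·(n−1)!) ) is integrable on (0,∞) and ∫₀^∞ (e^{−x/2}/x) · ∑_{n=1}^{∞} ( (λx/4)^n / (n!(n−1)!) ) dx = e^{λ/2} − 1; equivalently, the absolutely continuous part of the zero-degrees-of-freedom noncentral chi-squared density satisfies ∫₀^∞ (1/2)√(λ/x) · e^{−(x+λ)/2} · I₁(√(λx)) dx = 1 − e^{−λ/2}, where I₁(z) = ∑_{n=0}^{∞} (1/(n!(n+1)!))(z/2)^{2n+1}.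 -/
open MeasureTheory Set

lemma my_integrable_tsum {f : ℕ → ℝ → ℝ} {μ : Measure ℝ}
    (hint : ∀ n, Integrable (f n) μ) (hnn : ∀ n, 0 ≤ᵐ[μ] f n)
    (hsum : Summable fun n => ∫ x, f n x ∂μ) :
    Integrable (fun x => ∑' n, f n x) μ := by
  set F : ℕ → ℝ → ENNReal := fun n x => ENNReal.ofReal (f n x) with hF
  have hFm : ∀ n, AEMeasurable (F n) μ := fun n => (hint n).aemeasurable.ennreal_ofReal
  have heach : ∀ n, ∫⁻ x, F n x ∂μ = ENNReal.ofReal (∫ x, f n x ∂μ) := fun n =>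
    (ofReal_integral_eq_lintegral_ofReal (hint n) (hnn n)).symm
  have hfin : ∫⁻ x, ∑' n, F n x ∂μ ≠ ⊤ := by
    rw [lintegral_tsum hFm]
    simp_rw [heach]
    rw [← ENNReal.ofReal_tsum_of_nonneg (fun n => integral_nonneg_of_ae (hnn n)) hsum]
    exact ENNReal.ofReal_ne_top
  have hae : ∀ᵐ x ∂μ, ∑' n, F n x < ⊤ :=
    ae_lt_top' (AEMeasurable.ennreal_tsum hFm) hfin
  have hnn' : ∀ᵐ x ∂μ, ∀ n, 0 ≤ f n x := ae_all_iff.2 hnn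
  have hkey : ∀ᵐ x ∂μ, (∑' n, f n x) = (∑' n, F n x).toReal := by
    filter_upwards [hnn'] with x hx
    rw [ENNReal.tsum_toReal_eq (fun n => ENNReal.ofReal_ne_top)]
    exact tsum_congr fun n => (ENNReal.toReal_ofReal (hx n)).symm
  constructor
  · refine AEStronglyMeasurable.congr ?_ (Filter.EventuallyEq.symm hkey)
    exact ((AEMeasurable.ennreal_tsum hFm).ennreal_toReal).aestronglyMeasurable
  · rw [hasFiniteIntegral_iff_norm]
    calc ∫⁻ x, ENNReal.ofReal ‖∑' n, f n x‖ ∂μ = ∫⁻ x, ∑' n, F n x ∂μ := by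
          apply lintegral_congr_ae
          filter_upwards [hkey, hae, hnn'] with x h1 h2 h3
          rw [h1, Real.norm_of_nonneg ENNReal.toReal_nonneg, ENNReal.ofReal_toReal h2.ne]
      _ < ⊤ := lt_of_le_of_ne le_top hfin

lemma my_gamma_int (n : ℕ) :
    IntegrableOn (fun x : ℝ => x ^ n * Real.exp (-x / 2)) (Set.Ioi 0) ∧
    ∫ x in Set.Ioi (0:ℝ), x ^ n * Real.exp (-x / 2)
      = 2 ^ (n + 1) * (Nat.factorial n : ℝ) := by
  have ha : (0:ℝ) < (n:ℝ) + 1 := by positivity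
  have hr : (0:ℝ) < 1/2 := by norm_num
  have hval := Real.integral_rpow_mul_exp_neg_mul_Ioi ha hr
  have hcongr : ∀ x ∈ Set.Ioi (0:ℝ),
      x ^ (((n:ℝ) + 1) - 1) * Real.exp (-(1/2 * x)) = x ^ n * Real.exp (-x / 2) := by
    intro x hx
    rw [add_sub_cancel_right, Real.rpow_natCast]
    ring_nf
  have heq : ∫ x in Set.Ioi (0:ℝ), x ^ (((n:ℝ) + 1) - 1) * Real.exp (-(1/2 * x))
      = ∫ x in Set.Ioi (0:ℝ), x ^ n * Real.exp (-x / 2) :=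
    setIntegral_congr_fun measurableSet_Ioi hcongr
  have hval2 : ∫ x in Set.Ioi (0:ℝ), x ^ n * Real.exp (-x / 2)
      = 2 ^ (n + 1) * (Nat.factorial n : ℝ) := by
    rw [← heq, hval, Real.Gamma_nat_eq_factorial,
      show ((n:ℝ) + 1) = ((n+1 : ℕ) : ℝ) by push_cast; ring, Real.rpow_natCast]
    norm_num
  refine ⟨?_, hval2⟩
  by_contra h
  rw [MeasureTheory.integral_undef h] at hval2
  have : (0:ℝ) < 2 ^ (n + 1) * (Nat.factorial n : ℝ) := by positivity
  linarith [this, hval2.symm]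

lemma my_main (lam : ℝ) (hlam : 0 < lam) :
    IntegrableOn (fun x : ℝ => (Real.exp (-x / 2) / x) *
        ∑' n : ℕ, ((lam * x / 4) ^ (n + 1) /
          ((Nat.factorial (n + 1) : ℝ) * (Nat.factorial n : ℝ)))) (Set.Ioi 0) ∧
    ∫ x in Set.Ioi (0 : ℝ), (Real.exp (-x / 2) / x) *
        ∑' n : ℕ, ((lam * x / 4) ^ (n + 1) /
          ((Nat.factorial (n + 1) : ℝ) * (Nat.factorial n : ℝ)))
      = Real.exp (lam / 2) - 1 := by
  set fn : ℕ → ℝ → ℝ := fun n x => (Real.exp (-x / 2) / x) *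
    ((lam * x / 4) ^ (n + 1) / ((Nat.factorial (n + 1) : ℝ) * (Nat.factorial n : ℝ))) with hfn
  have hfun : (fun x : ℝ => (Real.exp (-x / 2) / x) *
      ∑' n : ℕ, ((lam * x / 4) ^ (n + 1) /
        ((Nat.factorial (n + 1) : ℝ) * (Nat.factorial n : ℝ))))
      = fun x => ∑' n, fn n x := by
    funext x
    exact (tsum_mul_left).symm
  have hK : ∀ n : ℕ, ((Nat.factorial (n + 1) : ℝ) * (Nat.factorial n : ℝ)) ≠ 0 := by
    intro n; positivity
  -- a.e. equality with the Gamma-type integrand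
  have haeeq : ∀ n : ℕ, fn n =ᵐ[volume.restrict (Set.Ioi 0)]
      fun x => ((lam / 4) ^ (n + 1) / ((Nat.factorial (n + 1) : ℝ) * (Nat.factorial n : ℝ))) *
        (x ^ n * Real.exp (-x / 2)) := by
    intro n
    rw [Filter.EventuallyEq, ae_restrict_iff' measurableSet_Ioi]
    filter_upwards with x hx
    have hx0 : x ≠ 0 := ne_of_gt hx
    simp only [hfn]
    field_simp
    ring
  have hint : ∀ n, IntegrableOn (fn n) (Set.Ioi 0) := by
    intro n
    exact (((my_gamma_int n).1.const_mul _).congr (haeeq n).symm)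
  have hintval : ∀ n : ℕ, ∫ x in Set.Ioi (0:ℝ), fn n x
      = (lam / 2) ^ (n + 1) / (Nat.factorial (n + 1) : ℝ) := by
    intro n
    rw [integral_congr_ae (haeeq n), integral_const_mul, (my_gamma_int n).2]
    have h4 : (lam / 4) ^ (n + 1) * 2 ^ (n + 1) = (lam / 2) ^ (n + 1) := by
      rw [← mul_pow]; congr 1; ring
    rw [← h4]
    field_simp
  have hnn : ∀ n : ℕ, 0 ≤ᵐ[volume.restrict (Set.Ioi 0)] fn n := by
    intro n
    refine (ae_restrict_iff' measurableSet_Ioi).2 ?_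
    filter_upwards with x hx
    simp only [Pi.zero_apply, hfn]
    have h1 : 0 ≤ Real.exp (-x / 2) / x := div_nonneg (Real.exp_nonneg _) hx.le
    have h2 : 0 ≤ lam * x / 4 := div_nonneg (mul_nonneg hlam.le hx.le) (by norm_num)
    exact mul_nonneg h1 (div_nonneg (pow_nonneg h2 _) (by
      have := Nat.factorial_pos (n+1); have := Nat.factorial_pos n; positivity))
  have hsum : Summable (fun n : ℕ => (lam / 2) ^ (n + 1) / (Nat.factorial (n + 1) : ℝ)) :=
    (summable_nat_add_iff 1).2 (Real.summable_pow_div_factorial (lam / 2))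
  have hsum' : Summable (fun n : ℕ => ∫ x in Set.Ioi (0:ℝ), fn n x) := by
    simp_rw [hintval]; exact hsum
  have htsum : (∑' n : ℕ, (lam / 2) ^ (n + 1) / (Nat.factorial (n + 1) : ℝ))
      = Real.exp (lam / 2) - 1 := by
    have hexp : Real.exp (lam / 2) = ∑' n : ℕ, (lam / 2) ^ n / (Nat.factorial n : ℝ) := by
      rw [Real.exp_eq_exp_ℝ, NormedSpace.exp_eq_tsum_div]
    have := Summable.tsum_eq_zero_add (Real.summable_pow_div_factorial (lam / 2))
    rw [hexp, this]
    simp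
  constructor
  · rw [hfun]
    exact my_integrable_tsum hint hnn hsum'
  · rw [hfun]
    have hnorm : ∀ n : ℕ, ∫ x in Set.Ioi (0:ℝ), ‖fn n x‖
        = ∫ x in Set.Ioi (0:ℝ), fn n x := by
      intro n
      refine integral_congr_ae ?_
      filter_upwards [hnn n] with x hx
      exact Real.norm_of_nonneg hx
    rw [← MeasureTheory.integral_tsum_of_summable_integral_norm hint ?hs]
    · simp_rw [hintval]; exact htsum
    · simp_rw [hnorm, hintval]; exact hsum

lemma my_bessel_eq (lam : ℝ) (hlam : 0 < lam) (x : ℝ) (hx : 0 < x) :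
    (1 / 2) * Real.sqrt (lam / x) * Real.exp (-(x + lam) / 2) *
      (∑' n : ℕ, (1 / ((Nat.factorial n : ℝ) * (Nat.factorial (n + 1) : ℝ))) *
        (Real.sqrt (lam * x) / 2) ^ (2 * n + 1))
    = Real.exp (-lam / 2) * ((Real.exp (-x / 2) / x) *
        ∑' n : ℕ, ((lam * x / 4) ^ (n + 1) /
          ((Nat.factorial (n + 1) : ℝ) * (Nat.factorial n : ℝ)))) := by
  have hlx : 0 < lam * x := by positivity
  have hs : 0 < Real.sqrt (lam * x) := Real.sqrt_pos.2 hlx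
  have hsq : Real.sqrt (lam * x) ^ 2 = lam * x := Real.sq_sqrt hlx.le
  have hsl : Real.sqrt (lam / x) = lam / Real.sqrt (lam * x) := by
    rw [eq_div_iff hs.ne', ← Real.sqrt_mul (div_nonneg hlam.le hx.le),
      show lam / x * (lam * x) = lam ^ 2 by field_simp, Real.sqrt_sq hlam.le]
  have hexp : Real.exp (-(x + lam) / 2) = Real.exp (-x / 2) * Real.exp (-lam / 2) := by
    rw [← Real.exp_add]; congr 1; ring
  rw [← tsum_mul_left, ← tsum_mul_left, ← tsum_mul_left]
  refine tsum_congr fun n => ?_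
  have hpow : Real.sqrt (lam * x) ^ (2 * n + 1)
      = (lam * x) ^ n * Real.sqrt (lam * x) := by
    rw [pow_succ, pow_mul, hsq]
  have h4 : (4 : ℝ) ^ (n + 1) = 2 ^ (2 * n + 1) * 2 := by
    rw [show (4:ℝ) = 2 ^ 2 by norm_num, ← pow_mul]; ring
  have hfac : ((Nat.factorial (n + 1) : ℝ) * (Nat.factorial n : ℝ)) ≠ 0 := by positivity
  rw [div_pow, hpow, hsl, hexp, div_pow (lam * x), h4]
  field_simp
  ring

/-- The absolutely continuous part of the zero-degrees-of-freedom noncentral chi-squared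
density has total mass `1 - e^{-λ/2}`: `∫₀^∞ (e^{-x/2}/x) ∑_{n≥1} (λx/4)^n/(n!(n-1)!) dx
= e^{λ/2} - 1`, equivalently `∫₀^∞ (1/2)√(λ/x) e^{-(x+λ)/2} I₁(√(λx)) dx = 1 - e^{-λ/2}`. -/
theorem noncentral_chisq_zero_dof_continuous_mass (lam : ℝ) (hlam : 0 < lam) :
    let I1 : ℝ → ℝ := fun z =>
      ∑' n : ℕ, (1 / ((Nat.factorial n : ℝ) * (Nat.factorial (n + 1) : ℝ))) *
        (z / 2) ^ (2 * n + 1)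
    IntegrableOn (fun x : ℝ => (Real.exp (-x / 2) / x) *
        ∑' n : ℕ, ((lam * x / 4) ^ (n + 1) /
          ((Nat.factorial (n + 1) : ℝ) * (Nat.factorial n : ℝ)))) (Set.Ioi 0) ∧
    ∫ x in Set.Ioi (0 : ℝ), (Real.exp (-x / 2) / x) *
        ∑' n : ℕ, ((lam * x / 4) ^ (n + 1) /
          ((Nat.factorial (n + 1) : ℝ) * (Nat.factorial n : ℝ)))
      = Real.exp (lam / 2) - 1 ∧
    IntegrableOn (fun x : ℝ =>
      (1 / 2) * Real.sqrt (lam / x) * Real.exp (-(x + lam) / 2) *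
        I1 (Real.sqrt (lam * x))) (Set.Ioi 0) ∧
    ∫ x in Set.Ioi (0 : ℝ),
        (1 / 2) * Real.sqrt (lam / x) * Real.exp (-(x + lam) / 2) * I1 (Real.sqrt (lam * x))
      = 1 - Real.exp (-lam / 2) := by
  intro I1
  obtain ⟨h1, h2⟩ := my_main lam hlam
  have haeeq : (fun x : ℝ =>
      (1 / 2) * Real.sqrt (lam / x) * Real.exp (-(x + lam) / 2) * I1 (Real.sqrt (lam * x)))
      =ᵐ[volume.restrict (Set.Ioi 0)]
      fun x : ℝ => Real.exp (-lam / 2) * ((Real.exp (-x / 2) / x) *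
        ∑' n : ℕ, ((lam * x / 4) ^ (n + 1) /
          ((Nat.factorial (n + 1) : ℝ) * (Nat.factorial n : ℝ)))) := by
    rw [Filter.EventuallyEq, ae_restrict_iff' measurableSet_Ioi]
    filter_upwards with x hx
    exact my_bessel_eq lam hlam x hx
  refine ⟨h1, h2, ?_, ?_⟩
  · exact (h1.const_mul (Real.exp (-lam / 2))).congr haeeq.symm
  · rw [integral_congr_ae haeeq, integral_const_mul, h2, mul_sub, ← Real.exp_add,
      show -lam / 2 + lam / 2 = 0 by ring, Real.exp_zero, mul_one]
end

section
/- Fix σ > 0, x₀ > 0 and t > 0, and define p(x) = (2/(σ²t)) · √(x₀/x) · exp( −2(x+x₀)/(σ²t) ) · I₁( 4√(x·x₀)/(σ²t) ) for x > 0, where I₁(z) = ∑_{n=0}^{∞} (1/(n!(n+1)!))(z/2)^{2n+1}. Then for every k ∈ ℝ, the function x ↦ p(x)·e^{−ikx} is integrable on (0,∞) and exp( −2x₀/(σ²t) ) + ∫₀^∞ p(x) · e^{−ikx} dx = exp( (−i·k·x₀) / (1 + (i·k·σ²·t)/2) ). -/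
open MeasureTheory Set Filter Topology
open scoped ENNReal NNReal


lemma aux_tendsto (n : ℕ) {b : ℝ} (hb : 0 < b) :
    Tendsto (fun x : ℝ => x ^ n * Real.exp (-b * x)) atTop (𝓝 0) := by
  have h2 : Tendsto (fun x : ℝ => b * x) atTop atTop :=
    Tendsto.const_mul_atTop hb tendsto_id
  have h4 : Tendsto (fun x : ℝ => (b*x) ^ n * Real.exp (-(b*x))) atTop (𝓝 0) :=
    (Real.tendsto_pow_mul_exp_neg_atTop_nhds_zero n).comp h2
  have h5 := h4.div_const (b^n)
  simp only [zero_div] at h5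
  refine h5.congr' ?_
  filter_upwards [eventually_gt_atTop 0] with x hx
  field_simp [mul_pow]
  ring

lemma aux_int_pow_exp (n : ℕ) {b : ℝ} (hb : 0 < b) :
    IntegrableOn (fun x : ℝ => x ^ n * Real.exp (-b * x)) (Set.Ioi 0) := by
  apply integrable_of_isBigO_exp_neg (half_pos hb) (by fun_prop)
  have h := aux_tendsto n (half_pos hb)
  have hO : (fun x : ℝ => x ^ n * Real.exp (-b * x)) =O[atTop]
      fun x => Real.exp (-(b/2) * x) := by
    have heq : (fun x : ℝ => x ^ n * Real.exp (-b * x)) =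
        fun x => (x ^ n * Real.exp (-(b/2) * x)) * Real.exp (-(b/2) * x) := by
      funext x
      rw [mul_assoc, ← Real.exp_add]
      ring_nf
    rw [heq]
    simpa using (h.isBigO_one ℝ).mul
      (Asymptotics.isBigO_refl (fun x : ℝ => Real.exp (-(b/2) * x)) atTop)
  exact hO

lemma aux_key {c : ℂ} (hc : 0 < c.re) (n : ℕ) :
    Tendsto (fun x : ℝ => (x:ℂ) ^ n * Complex.exp (-(c*x))) atTop (𝓝 0) := by
  apply squeeze_zero_norm' ?_ (aux_tendsto n hc)
  filter_upwards [eventually_ge_atTop 0] with x hx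
  rw [norm_mul, norm_pow]
  simp only [Complex.norm_exp, Complex.norm_real, Real.norm_eq_abs, abs_of_nonneg hx,
    Complex.neg_re, Complex.mul_re, Complex.ofReal_re, Complex.ofReal_im, mul_zero, sub_zero,
    Function.comp_apply, neg_mul, le_refl]

lemma aux_hd1 {c : ℂ} (x : ℝ) :
    HasDerivAt (fun x : ℝ => Complex.exp (-(c*x))) (Complex.exp (-(c*x)) * (-c)) x := by
  have h1 : HasDerivAt (fun x : ℝ => (x:ℂ)) 1 x := Complex.ofRealCLM.hasDerivAt
  simpa using ((h1.const_mul c).neg).cexp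

lemma aux_int_c {c : ℂ} (hc : 0 < c.re) (n : ℕ) :
    IntegrableOn (fun x : ℝ => (x:ℂ) ^ n * Complex.exp (-(c*x))) (Set.Ioi 0) := by
  apply Integrable.mono' (aux_int_pow_exp n hc)
    (((Complex.continuous_ofReal.pow n).mul (Complex.continuous_exp.comp
      (by continuity))).aestronglyMeasurable)
  filter_upwards [ae_restrict_mem measurableSet_Ioi] with x hx
  show ‖(x:ℂ) ^ n * Complex.exp (-(c*x))‖ ≤ _
  rw [norm_mul, norm_pow]
  simp only [Complex.norm_exp, Complex.norm_real, Real.norm_eq_abs,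
    abs_of_nonneg (le_of_lt (mem_Ioi.mp hx)), Complex.neg_re, Complex.mul_re, Complex.ofReal_re,
    Complex.ofReal_im, mul_zero, sub_zero, Function.comp_apply, neg_mul, le_refl]

lemma aux_laplace {c : ℂ} (hc : 0 < c.re) : ∀ n : ℕ,
    ∫ x in Set.Ioi (0:ℝ), (x:ℂ) ^ n * Complex.exp (-(c*x)) = (n.factorial : ℂ) / c ^ (n+1) := by
  have hc0 : c ≠ 0 := fun h => by simp [h] at hc
  intro n
  induction n with
  | zero =>
    have hd : ∀ x ∈ Ici (0:ℝ), HasDerivAt (fun x : ℝ => -c⁻¹ * Complex.exp (-(c*x)))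
        ((fun x : ℝ => (x:ℂ) ^ 0 * Complex.exp (-(c*x))) x) x := by
      intro x _
      have := (aux_hd1 (c := c) x).const_mul (-c⁻¹)
      refine this.congr_deriv ?_
      beta_reduce
      linear_combination (Complex.exp (-(c*x))) * inv_mul_cancel₀ hc0
    have := integral_Ioi_of_hasDerivAt_of_tendsto' hd
      (by simpa using aux_int_c hc 0)
      (by simpa using ((aux_key hc 0).const_mul (-c⁻¹)))
    simp only [this]
    simp [Complex.exp_zero]
  | succ n ih =>
    have h1 : ∀ x : ℝ, HasDerivAt (fun x : ℝ => (x:ℂ)) 1 x := fun x => Complex.ofRealCLM.hasDerivAt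
    have hd : ∀ x ∈ Ici (0:ℝ), HasDerivAt (fun x : ℝ => (x:ℂ) ^ (n+1) * Complex.exp (-(c*x)))
        ((n+1 : ℂ) * ((x:ℂ) ^ n * Complex.exp (-(c*x)))
          - c * ((x:ℂ) ^ (n+1) * Complex.exp (-(c*x)))) x := by
      intro x _
      have hp : HasDerivAt (fun y : ℝ => (y:ℂ) ^ (n+1)) (((n:ℂ)+1) * (x:ℂ) ^ n) x := by
        simpa using (hasDerivAt_pow (n+1) (x:ℂ)).comp_ofReal
      have := hp.mul (aux_hd1 (c := c) x)
      refine this.congr_deriv ?_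
      push_cast
      ring
    have hint : IntegrableOn (fun x : ℝ => (n+1 : ℂ) * ((x:ℂ) ^ n * Complex.exp (-(c*x)))
        - c * ((x:ℂ) ^ (n+1) * Complex.exp (-(c*x)))) (Set.Ioi 0) :=
      ((aux_int_c hc n).const_mul _).sub ((aux_int_c hc (n+1)).const_mul _)
    have hzero := integral_Ioi_of_hasDerivAt_of_tendsto' hd hint (aux_key hc (n+1))
    simp only [Complex.ofReal_zero, zero_pow (Nat.succ_ne_zero n), zero_mul, sub_zero] at hzero
    rw [integral_sub ((aux_int_c hc n).const_mul _) ((aux_int_c hc (n+1)).const_mul _),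
      integral_const_mul, integral_const_mul, ih] at hzero
    have : c * ∫ x in Set.Ioi (0:ℝ), (x:ℂ) ^ (n+1) * Complex.exp (-(c*x))
        = (n+1 : ℂ) * ((n.factorial : ℂ) / c ^ (n+1)) := by linear_combination -hzero
    rw [eq_div_iff (pow_ne_zero _ hc0)]
    field_simp at this
    rw [Nat.factorial_succ]
    push_cast
    linear_combination this


lemma aux_integrable_tsum {F : ℕ → ℝ → ℂ} {μ : Measure ℝ}
    (hF_int : ∀ i, Integrable (F i) μ)
    (hF_sum : Summable fun i => ∫ a, ‖F i a‖ ∂μ)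
    (hpt : ∀ᵐ a ∂μ, Summable fun i => ‖F i a‖) :
    Integrable (fun a => ∑' i, F i a) μ := by
  constructor
  · apply aestronglyMeasurable_of_tendsto_ae atTop
      (fun N => Finset.aestronglyMeasurable_sum (Finset.range N)
        (fun i _ => (hF_int i).aestronglyMeasurable))
    filter_upwards [hpt] with a ha
    exact ha.of_norm.hasSum.tendsto_sum_nat.congr (fun n => (Finset.sum_apply a _ _).symm)
  · have h1 : ∀ᵐ a ∂μ, (‖∑' i, F i a‖₊ : ℝ≥0∞) ≤ ∑' i, (‖F i a‖₊ : ℝ≥0∞) := by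
      filter_upwards [hpt] with a ha
      have hs : Summable fun i => ‖F i a‖₊ := by
        rwa [← NNReal.summable_coe]
      calc (‖∑' i, F i a‖₊ : ℝ≥0∞) ≤ ((∑' i, ‖F i a‖₊ : ℝ≥0) : ℝ≥0∞) :=
            ENNReal.coe_le_coe.2 (nnnorm_tsum_le hs)
        _ = _ := ENNReal.coe_tsum hs
    have : ∫⁻ a, ‖∑' i, F i a‖₊ ∂μ < ⊤ := by
      calc ∫⁻ a, (‖∑' i, F i a‖₊ : ℝ≥0∞) ∂μ
          ≤ ∫⁻ a, ∑' i, (‖F i a‖₊ : ℝ≥0∞) ∂μ := lintegral_mono_ae h1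
        _ = ∑' i, ∫⁻ a, (‖F i a‖₊ : ℝ≥0∞) ∂μ :=
            lintegral_tsum (fun i => (hF_int i).aestronglyMeasurable.enorm)
        _ = ∑' i, ENNReal.ofReal (∫ a, ‖F i a‖ ∂μ) := by
            refine tsum_congr fun i => ?_
            rw [lintegral_coe_eq_integral (fun x => ‖F i x‖₊) (by simpa using (hF_int i).norm)]
            simp [coe_nnnorm]
        _ = ENNReal.ofReal (∑' i, ∫ a, ‖F i a‖ ∂μ) :=
            (ENNReal.ofReal_tsum_of_nonneg
              (fun i => integral_nonneg (fun a => norm_nonneg _)) hF_sum).symm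
        _ < ⊤ := ENNReal.ofReal_lt_top
    exact this


/-- The Fourier transform of the Feller diffusion transition density (atom at 0 of mass
`exp(-2x₀/(σ²t))` plus its absolutely continuous part `p`) equals
`exp(-i k x₀/(1 + i k σ² t/2))`. -/
theorem feller_density_fourier_transform (σ x₀ t : ℝ) (hσ : 0 < σ) (hx₀ : 0 < x₀)
    (ht : 0 < t) :
    let I1 : ℝ → ℝ := fun z =>
      ∑' n : ℕ, (1 / ((Nat.factorial n : ℝ) * (Nat.factorial (n + 1) : ℝ))) *
        (z / 2) ^ (2 * n + 1)
    let p : ℝ → ℝ := fun x =>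
      (2 / (σ ^ 2 * t)) * Real.sqrt (x₀ / x) * Real.exp (-2 * (x + x₀) / (σ ^ 2 * t)) *
        I1 (4 * Real.sqrt (x * x₀) / (σ ^ 2 * t))
    ∀ k : ℝ,
      IntegrableOn (fun x : ℝ => (p x : ℂ) * Complex.exp (-Complex.I * k * x))
        (Set.Ioi 0) ∧
      ((Real.exp (-2 * x₀ / (σ ^ 2 * t)) : ℝ) : ℂ) +
          ∫ x in Set.Ioi (0 : ℝ), (p x : ℂ) * Complex.exp (-Complex.I * k * x)
        = Complex.exp ((-Complex.I * k * x₀) / (1 + Complex.I * k * σ ^ 2 * t / 2)) := by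
  intro I1 p k
  simp only [p, I1]
  have hA : 0 < σ ^ 2 * t := by positivity
  obtain ⟨a, ha_def⟩ : ∃ a : ℝ, a = 2 / (σ ^ 2 * t) := ⟨_, rfl⟩
  have ha : 0 < a := by rw [ha_def]; positivity
  obtain ⟨c, hc_def⟩ : ∃ c : ℂ, c = (a : ℂ) + Complex.I * k := ⟨_, rfl⟩
  have hcre : c.re = a := by simp [hc_def]
  have hc : 0 < c.re := by rw [hcre]; exact ha
  have hc0 : c ≠ 0 := by
    intro h
    rw [h] at hc
    simp at hc
  obtain ⟨C, hC_def⟩ : ∃ C : ℕ → ℝ, C = fun n =>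
      Real.exp (-(a * x₀)) * a ^ (2*n+2) * x₀ ^ (n+1) /
        ((n.factorial : ℝ) * ((n+1).factorial : ℝ)) := ⟨_, rfl⟩
  have hCpos : ∀ n, 0 < C n := by
    intro n
    rw [hC_def]
    have h1 : (0:ℝ) < (n.factorial : ℝ) := by positivity
    have h2 : (0:ℝ) < ((n+1).factorial : ℝ) := by positivity
    positivity
  obtain ⟨F, hF_def⟩ : ∃ F : ℕ → ℝ → ℂ, F = fun (n : ℕ) (x : ℝ) =>
      (C n : ℂ) * ((x:ℂ) ^ n * Complex.exp (-(c * x))) := ⟨_, rfl⟩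
  have hFint : ∀ n, Integrable (F n) (volume.restrict (Set.Ioi 0)) := by
    intro n; rw [hF_def]; exact (aux_int_c hc n).const_mul _
  have hFnorm : ∀ n (x : ℝ), 0 ≤ x → ‖F n x‖ = C n * (x ^ n * Real.exp (-(a * x))) := by
    intro n x hx
    rw [hF_def]
    simp only [norm_mul, norm_pow, Complex.norm_exp, Complex.norm_real, Real.norm_eq_abs,
      abs_of_nonneg hx, abs_of_pos (hCpos n), Complex.neg_re, Complex.mul_re, hcre,
      Complex.ofReal_re, Complex.ofReal_im, mul_zero, sub_zero]
  -- real integral value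
  have hreal : ∀ n : ℕ, ∫ x in Set.Ioi (0:ℝ), x ^ n * Real.exp (-(a*x))
      = (n.factorial : ℝ) / a ^ (n+1) := by
    intro n
    have h1 : ((∫ x in Set.Ioi (0:ℝ), x ^ n * Real.exp (-(a*x)) : ℝ) : ℂ)
        = ∫ x in Set.Ioi (0:ℝ), (x:ℂ) ^ n * Complex.exp (-((a:ℂ) * x)) := by
      have h2 : ((∫ x in Set.Ioi (0:ℝ), x ^ n * Real.exp (-(a*x)) : ℝ) : ℂ)
          = ∫ x in Set.Ioi (0:ℝ), ((x ^ n * Real.exp (-(a*x)) : ℝ) : ℂ) :=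
        (integral_ofReal (𝕜 := ℂ) (f := fun x : ℝ => x ^ n * Real.exp (-(a*x)))
          (μ := volume.restrict (Set.Ioi 0))).symm
      rw [h2]
      refine setIntegral_congr_fun measurableSet_Ioi (fun x _ => ?_)
      push_cast [Complex.ofReal_exp]
      ring_nf
    apply Complex.ofReal_injective
    rw [h1, aux_laplace (c := (a:ℂ)) (by simpa using ha) n]
    push_cast
    ring
  -- norm integrals
  have hnormint : ∀ n : ℕ, ∫ x in Set.Ioi (0:ℝ), ‖F n x‖
      = C n * ((n.factorial : ℝ) / a ^ (n+1)) := by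
    intro n
    rw [← hreal n, ← integral_const_mul]
    refine setIntegral_congr_fun measurableSet_Ioi (fun x hx => ?_)
    rw [hFnorm n x (le_of_lt hx)]
  -- summability of norm integrals
  have hsum : Summable fun n => ∫ x in Set.Ioi (0:ℝ), ‖F n x‖ := by
    have heq : ∀ n : ℕ, C n * ((n.factorial : ℝ) / a ^ (n+1))
        = Real.exp (-(a*x₀)) * ((a*x₀) ^ (n+1) / ((n+1).factorial : ℝ)) := by
      intro n
      rw [hC_def]
      have h1 : (n.factorial : ℝ) ≠ 0 := by positivity
      have h2 : ((n+1).factorial : ℝ) ≠ 0 := by positivity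
      field_simp
      ring
    simp_rw [hnormint, heq]
    apply Summable.mul_left
    exact ((Real.summable_pow_div_factorial (a*x₀)).comp_injective Nat.succ_injective)
  -- pointwise summability of norms
  have hptsum : ∀ x : ℝ, 0 ≤ x → Summable fun n => ‖F n x‖ := by
    intro x hx
    have hb : ∀ n : ℕ, ‖F n x‖ ≤
        (Real.exp (-(a*x₀)) * (a^2*x₀) * Real.exp (-(a*x))) * ((a^2*x₀*x) ^ n / (n.factorial : ℝ)) := by
      intro n
      rw [hFnorm n x hx, hC_def]
      have h1 : (0:ℝ) < (n.factorial : ℝ) := by positivity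
      have h2 : (0:ℝ) < ((n+1).factorial : ℝ) := by positivity
      have h3 : (1:ℝ) ≤ ((n+1).factorial : ℝ) := by
        exact_mod_cast Nat.one_le_iff_ne_zero.2 (Nat.factorial_ne_zero _)
      have e1 : Real.exp (-(a * x₀)) * a ^ (2*n+2) * x₀ ^ (n+1) /
            ((n.factorial : ℝ) * ((n+1).factorial : ℝ)) * (x ^ n * Real.exp (-(a*x)))
          = ((Real.exp (-(a*x₀)) * (a^2*x₀) * Real.exp (-(a*x))) *
              ((a^2*x₀*x) ^ n / (n.factorial : ℝ))) * (1 / ((n+1).factorial : ℝ)) := by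
        field_simp
        ring
      rw [e1]
      apply mul_le_of_le_one_right
      · positivity
      · rw [div_le_one (by positivity)] at *
        simpa using h3
    apply Summable.of_nonneg_of_le (fun n => norm_nonneg _) hb
    exact (Real.summable_pow_div_factorial (a^2*x₀*x)).mul_left _
  -- pointwise real identity
  have hpreal : ∀ x : ℝ, x ∈ Set.Ioi (0:ℝ) →
      (2 / (σ ^ 2 * t)) * Real.sqrt (x₀ / x) * Real.exp (-2 * (x + x₀) / (σ ^ 2 * t)) *
        (∑' n : ℕ, (1 / ((Nat.factorial n : ℝ) * (Nat.factorial (n + 1) : ℝ))) *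
          ((4 * Real.sqrt (x * x₀) / (σ ^ 2 * t)) / 2) ^ (2 * n + 1))
      = ∑' n, C n * (x ^ n * Real.exp (-(a*x))) := by
    intro x hx
    rw [Set.mem_Ioi] at hx
    have e1 : -2 * (x + x₀) / (σ ^ 2 * t) = -(a*(x+x₀)) := by rw [ha_def]; ring
    have e2 : (4 * Real.sqrt (x * x₀) / (σ ^ 2 * t)) / 2 = a * Real.sqrt (x * x₀) := by
      rw [ha_def]; ring
    have e3 : 2 / (σ ^ 2 * t) = a := ha_def.symm
    rw [e1, e2, e3, ← tsum_mul_left]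
    refine tsum_congr fun n => ?_
    have hs1 : (a * Real.sqrt (x*x₀)) ^ (2*n+1)
        = a ^ (2*n+1) * ((x*x₀) ^ n * Real.sqrt (x*x₀)) := by
      rw [mul_pow]
      congr 1
      rw [pow_succ, pow_mul, Real.sq_sqrt (by positivity)]
    have hs2 : Real.sqrt (x₀/x) * Real.sqrt (x*x₀) = x₀ := by
      rw [← Real.sqrt_mul (by positivity)]
      have : x₀/x*(x*x₀) = x₀^2 := by field_simp
      rw [this, Real.sqrt_sq hx₀.le]
    have hexp : Real.exp (-(a*(x+x₀))) = Real.exp (-(a*x)) * Real.exp (-(a*x₀)) := by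
      rw [← Real.exp_add]; ring_nf
    rw [hs1, hexp, hC_def]
    linear_combination (a^(2*n+1) * a * (x*x₀)^n * Real.exp (-(a*x)) * Real.exp (-(a*x₀))
      / ((n.factorial : ℝ) * ((n+1).factorial : ℝ))) * hs2
  -- pointwise complex identity
  have hpt : ∀ x ∈ Set.Ioi (0:ℝ),
      (((2 / (σ ^ 2 * t)) * Real.sqrt (x₀ / x) * Real.exp (-2 * (x + x₀) / (σ ^ 2 * t)) *
        (∑' n : ℕ, (1 / ((Nat.factorial n : ℝ) * (Nat.factorial (n + 1) : ℝ))) *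
          ((4 * Real.sqrt (x * x₀) / (σ ^ 2 * t)) / 2) ^ (2 * n + 1)) : ℝ) : ℂ) *
        Complex.exp (-Complex.I * k * x) = ∑' n, F n x := by
    intro x hx
    have hsplit : Complex.exp (-(c * x)) = ((Real.exp (-(a*x)) : ℝ) : ℂ) *
        Complex.exp (-Complex.I * k * x) := by
      rw [Complex.ofReal_exp, ← Complex.exp_add]
      congr 1
      rw [hc_def]
      push_cast
      ring
    rw [hpreal x hx, Complex.ofReal_tsum]
    rw [← tsum_mul_right]
    refine tsum_congr fun n => ?_
    rw [hF_def]
    simp only []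
    rw [hsplit]
    push_cast
    ring
  -- integrability of tsum
  have hS_int : Integrable (fun x => ∑' n, F n x) (volume.restrict (Set.Ioi 0)) := by
    apply aux_integrable_tsum hFint hsum
    filter_upwards [ae_restrict_mem measurableSet_Ioi] with x hx
    exact hptsum x (le_of_lt hx)
  have hcongr : (fun x : ℝ =>
      (((2 / (σ ^ 2 * t)) * Real.sqrt (x₀ / x) * Real.exp (-2 * (x + x₀) / (σ ^ 2 * t)) *
        (∑' n : ℕ, (1 / ((Nat.factorial n : ℝ) * (Nat.factorial (n + 1) : ℝ))) *
          ((4 * Real.sqrt (x * x₀) / (σ ^ 2 * t)) / 2) ^ (2 * n + 1)) : ℝ) : ℂ) *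
        Complex.exp (-Complex.I * k * x))
      =ᵐ[volume.restrict (Set.Ioi 0)] fun x => ∑' n, F n x := by
    filter_upwards [ae_restrict_mem measurableSet_Ioi] with x hx
    exact hpt x hx
  constructor
  · exact hS_int.congr hcongr.symm
  · rw [integral_congr_ae hcongr]
    rw [← integral_tsum_of_summable_integral_norm hFint hsum]
    have hterm : ∀ n : ℕ, ∫ x in Set.Ioi (0:ℝ), F n x
        = ((Real.exp (-(a*x₀)) : ℝ) : ℂ) *
          (((a:ℂ)^2 * x₀ / c) ^ (n+1) / (((n+1).factorial : ℕ) : ℂ)) := by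
      intro n
      rw [hF_def]
      simp only []
      rw [integral_const_mul, aux_laplace hc n, hC_def]
      have h1 : ((n.factorial : ℕ) : ℂ) ≠ 0 := by exact_mod_cast Nat.factorial_ne_zero n
      have h2 : (((n+1).factorial : ℕ) : ℂ) ≠ 0 := by exact_mod_cast Nat.factorial_ne_zero (n+1)
      push_cast
      field_simp
      have hcn : c * c ^ n * c⁻¹ * c⁻¹ ^ n = 1 := by
        rw [mul_right_comm c (c ^ n) c⁻¹, mul_inv_cancel₀ hc0, one_mul, ← mul_pow,
          mul_inv_cancel₀ hc0, one_pow]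
      linear_combination (-((a:ℂ) ^ 2 * (a:ℂ) ^ (n * 2) * (x₀:ℂ) * (x₀:ℂ) ^ n)) * hcn
    rw [tsum_congr hterm, tsum_mul_left]
    have hexpseries : ∑' n : ℕ, ((a:ℂ)^2 * x₀ / c) ^ (n+1) / (((n+1).factorial : ℕ) : ℂ)
        = Complex.exp ((a:ℂ)^2 * x₀ / c) - 1 := by
      have hsummable : Summable fun n : ℕ => ((a:ℂ)^2 * x₀ / c) ^ n / ((n.factorial : ℕ) : ℂ) :=
        NormedSpace.expSeries_div_summable _
      have h0 := Summable.tsum_eq_zero_add hsummable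
      have hval : ∑' n : ℕ, ((a:ℂ)^2 * x₀ / c) ^ n / ((n.factorial : ℕ) : ℂ)
          = Complex.exp ((a:ℂ)^2 * x₀ / c) := by
        rw [Complex.exp_eq_exp_ℂ, NormedSpace.exp_eq_tsum_div]
      rw [hval] at h0
      simp only [pow_zero, Nat.factorial_zero, Nat.cast_one] at h0
      linear_combination -h0
    rw [hexpseries]
    -- final algebra
    have e4 : -2 * x₀ / (σ ^ 2 * t) = -(a*x₀) := by rw [ha_def]; ring
    rw [e4]
    have hcomb : ((Real.exp (-(a*x₀)) : ℝ) : ℂ) +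
        ((Real.exp (-(a*x₀)) : ℝ) : ℂ) * (Complex.exp ((a:ℂ)^2 * x₀ / c) - 1)
        = Complex.exp (((-(a*x₀) : ℝ) : ℂ) + (a:ℂ)^2 * x₀ / c) := by
      rw [Complex.exp_add, ← Complex.ofReal_exp]
      ring
    rw [hcomb]
    congr 1
    -- exponent equality
    have ha2 : (a:ℂ) * ((σ:ℂ)^2 * t) = 2 := by
      have : a * (σ^2*t) = 2 := by rw [ha_def]; field_simp
      exact_mod_cast this
    have hAne : ((σ:ℂ)^2 * t) ≠ 0 := by
      exact_mod_cast ne_of_gt hA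
    have hden : (1 : ℂ) + Complex.I * k * σ^2 * t / 2 = c * ((σ:ℂ)^2 * t) / 2 := by
      rw [hc_def]
      field_simp
      linear_combination -ha2
    rw [hden]
    have hane : (a:ℂ) ≠ 0 := by exact_mod_cast ne_of_gt ha
    push_cast
    rw [eq_div_iff (div_ne_zero (mul_ne_zero hc0 hAne) two_ne_zero)]
    linear_combination ((a:ℂ)^2*x₀*((σ:ℂ)^2*t)/2) * inv_mul_cancel₀ hc0 + (-(x₀:ℂ)*c/2 + a*x₀/2) * ha2 + (-(x₀:ℂ)) * hc_def
end

section
/- Fix σ > 0 and x₀ > 0, and define p(x,t) = (2/(σ²t)) · √(x₀/x) · exp( −2(x+x₀)/(σ²t) ) · I₁( 4√(x·x₀)/(σ²t) ) for x > 0 and t > 0, where I₁(z) = ∑_{n=0}^{∞} (1/(n!(n+1)!))(z/2)^{2n+1}. Then p is smooth on (0,∞) × (0,∞) and satisfies the Fokker–Planck equation ∂p/∂t (x,t) = (σ²/2) · ∂²/∂x² ( x · p(x,t) ) at every point (x,t) with x > 0 and t > 0. -/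
open scoped Topology

noncomputable def fgAux (k : ℕ) (u : ℝ) : ℝ :=
  ∑' n : ℕ, (1 / ((Nat.factorial n : ℝ) * (Nat.factorial (n + k) : ℝ))) * u ^ n

lemma coef_summable {c : ℕ → ℝ} (hc : ∀ n, |c n| ≤ 1 / (Nat.factorial n : ℝ)) (u : ℝ) :
    Summable (fun n => c n * u ^ n) := by
  apply Summable.of_norm_bounded (Real.summable_pow_div_factorial |u|)
  intro n
  rw [norm_mul, norm_pow, Real.norm_eq_abs, Real.norm_eq_abs]
  calc |c n| * |u| ^ n ≤ (1 / (Nat.factorial n : ℝ)) * |u| ^ n := by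
        gcongr; exact hc n
    _ = |u| ^ n / (Nat.factorial n : ℝ) := by ring

lemma hasDerivAt_tsum_coef {c : ℕ → ℝ} (hc : ∀ n, |c n| ≤ 1 / (Nat.factorial n : ℝ))
    (hc' : ∀ n : ℕ, |((n : ℝ) + 1) * c (n + 1)| ≤ 1 / (Nat.factorial n : ℝ)) (u : ℝ) :
    HasDerivAt (fun y => ∑' n : ℕ, c n * y ^ n)
      (∑' n : ℕ, ((n : ℝ) + 1) * c (n + 1) * u ^ n) u := by
  set R : ℝ := |u| + 1 with hR
  have hR1 : 1 ≤ R := by have := abs_nonneg u; simp only [hR]; linarith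
  have hmem : u ∈ Set.Ioo (-R) R := by
    constructor
    · nlinarith [abs_nonneg u, neg_abs_le u]
    · nlinarith [le_abs_self u]
  have key : HasDerivAt (fun y => ∑' n : ℕ, c n * y ^ n)
      (∑' n : ℕ, c n * ((n : ℝ) * u ^ (n - 1))) u := by
    refine hasDerivAt_tsum_of_isPreconnected (u := fun n => (2 * R) ^ n / (Nat.factorial n : ℝ))
      (Real.summable_pow_div_factorial (2 * R)) isOpen_Ioo ((convex_Ioo _ _).isPreconnected)
      (fun n y _ => (hasDerivAt_pow n y).const_mul (c n)) ?_ hmem (coef_summable hc u) hmem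
    intro n y hy
    have hyR : |y| ≤ R := le_of_lt (abs_lt.mpr ⟨hy.1, hy.2⟩)
    have h1 : ‖c n * ((n : ℝ) * y ^ (n - 1))‖ = |c n| * ((n : ℝ) * |y| ^ (n - 1)) := by
      simp [Real.norm_eq_abs, abs_mul, abs_pow]
    rw [h1]
    have hn2 : (n : ℝ) ≤ 2 ^ n := by
      exact_mod_cast (Nat.lt_two_pow_self (n := n)).le
    have h3 : |y| ^ (n - 1) ≤ R ^ n :=
      le_trans (pow_le_pow_left₀ (abs_nonneg y) hyR _)
        (pow_le_pow_right₀ hR1 (Nat.sub_le n 1))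
    have h4 : (n : ℝ) * |y| ^ (n - 1) ≤ 2 ^ n * R ^ n :=
      mul_le_mul hn2 h3 (by positivity) (by positivity)
    have h5 : |c n| * ((n : ℝ) * |y| ^ (n - 1))
        ≤ (1 / (Nat.factorial n : ℝ)) * (2 ^ n * R ^ n) :=
      mul_le_mul (hc n) h4 (by positivity) (by positivity)
    have h6 : (1 / (Nat.factorial n : ℝ)) * (2 ^ n * R ^ n)
        = (2 * R) ^ n / (Nat.factorial n : ℝ) := by rw [mul_pow]; ring
    exact le_of_le_of_eq h5 h6
  convert key using 1
  have hf0 : c 0 * ((0 : ℝ) * u ^ (0 - 1)) = 0 := by simp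
  have hshift : ∀ n : ℕ, c (n + 1) * (((n + 1 : ℕ) : ℝ) * u ^ (n + 1 - 1))
      = ((n : ℝ) + 1) * c (n + 1) * u ^ n := by
    intro n
    push_cast [Nat.add_sub_cancel]
    ring
  have hs2 : Summable (fun n : ℕ => ((n : ℝ) + 1) * c (n + 1) * u ^ n) := coef_summable hc' u
  have hs : Summable (fun n : ℕ => c n * ((n : ℝ) * u ^ (n - 1))) := by
    rw [← summable_nat_add_iff 1]
    simpa only [hshift] using hs2
  rw [Summable.tsum_eq_zero_add hs]
  simp only [hshift, hf0, Nat.cast_zero, zero_add]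

lemma fgAux_coef_bound (k : ℕ) :
    ∀ n : ℕ, |1 / ((Nat.factorial n : ℝ) * (Nat.factorial (n + k) : ℝ))|
      ≤ 1 / (Nat.factorial n : ℝ) := by
  intro n
  have h1 : (0:ℝ) < Nat.factorial n := by exact_mod_cast Nat.factorial_pos n
  have h2 : (1:ℝ) ≤ Nat.factorial (n + k) := by
    exact_mod_cast Nat.one_le_iff_ne_zero.mpr (Nat.factorial_ne_zero _)
  rw [abs_of_pos (by positivity), div_le_div_iff₀ (by positivity) h1]
  nlinarith

lemma fgAux_coef_shift (k : ℕ) (n : ℕ) :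
    ((n : ℝ) + 1) * (1 / ((Nat.factorial (n+1) : ℝ) * (Nat.factorial (n + 1 + k) : ℝ)))
      = 1 / ((Nat.factorial n : ℝ) * (Nat.factorial (n + (k+1)) : ℝ)) := by
  have h1 : (0:ℝ) < Nat.factorial n := by exact_mod_cast Nat.factorial_pos n
  have h2 : (0:ℝ) < Nat.factorial (n + 1 + k) := by exact_mod_cast Nat.factorial_pos _
  have h3 : n + (k + 1) = n + 1 + k := by ring
  rw [h3, Nat.factorial_succ]
  push_cast
  field_simp

lemma hasDerivAt_fgAux (k : ℕ) (u : ℝ) :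
    HasDerivAt (fgAux k) (fgAux (k+1) u) u := by
  have h := hasDerivAt_tsum_coef
    (c := fun n => 1 / ((Nat.factorial n : ℝ) * (Nat.factorial (n + k) : ℝ)))
    (fgAux_coef_bound k)
    (fun n => by rw [fgAux_coef_shift k n]; exact fgAux_coef_bound (k+1) n) u
  have he : (∑' n : ℕ, ((n : ℝ) + 1)
        * (1 / ((Nat.factorial (n+1) : ℝ) * (Nat.factorial (n + 1 + k) : ℝ))) * u ^ n)
      = fgAux (k+1) u := by
    apply tsum_congr
    intro n
    rw [fgAux_coef_shift k n]
  rw [he] at h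
  exact h

lemma analyticAt_fgAux (k : ℕ) (x : ℝ) : AnalyticAt ℝ (fgAux k) x := by
  set c : ℕ → ℝ := fun n => 1 / ((Nat.factorial n : ℝ) * (Nat.factorial (n + k) : ℝ)) with hc
  set ps := FormalMultilinearSeries.ofScalars ℝ c with hps
  have hnorm : ∀ n, ‖ps n‖ = |c n| := by
    intro n
    rw [hps, FormalMultilinearSeries.ofScalars_norm, Real.norm_eq_abs]
  have hrad : ps.radius = ⊤ := by
    refine le_antisymm le_top (ENNReal.le_of_forall_nnreal_lt fun r _ => ?_)
    apply ps.le_radius_of_summable_norm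
    apply coef_summable (c := fun n => ‖ps n‖)
    intro n
    rw [hnorm n, abs_abs]
    exact fgAux_coef_bound k n
  have hsum_eq : ps.sum = fgAux k := by
    funext u
    have h1 : ps.sum u = ∑' n : ℕ, c n • u ^ n := FormalMultilinearSeries.ofScalars_sum_eq c u
    rw [h1, fgAux]
    exact tsum_congr fun n => by rw [smul_eq_mul]
  have h := ps.hasFPowerSeriesOnBall (by rw [hrad]; exact ENNReal.zero_lt_top)
  rw [hsum_eq, hrad] at h
  exact h.analyticOnNhd x (by simp [EMetric.mem_ball, edist_lt_top])

lemma contDiff_fgAux (k : ℕ) {n : WithTop ℕ∞} : ContDiff ℝ n (fgAux k) :=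
  contDiff_iff_contDiffAt.mpr fun x => (analyticAt_fgAux k x).contDiffAt

lemma fgAux_ode (u : ℝ) : u * fgAux 3 u = fgAux 1 u - 2 * fgAux 2 u := by
  have hsum : ∀ k : ℕ, Summable
      (fun n : ℕ => (1 / ((Nat.factorial n : ℝ) * (Nat.factorial (n + k) : ℝ))) * u ^ n) :=
    fun k => coef_summable (fgAux_coef_bound k) u
  have hL : u * fgAux 3 u
      = ∑' n : ℕ, (1 / ((Nat.factorial n : ℝ) * (Nat.factorial (n + 3) : ℝ))) * u ^ (n+1) := by
    rw [fgAux, ← tsum_mul_left]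
    exact tsum_congr fun n => by ring
  have hR : fgAux 1 u - 2 * fgAux 2 u
      = ∑' n : ℕ, ((1 / ((Nat.factorial n : ℝ) * (Nat.factorial (n + 1) : ℝ))) * u ^ n
          - 2 * ((1 / ((Nat.factorial n : ℝ) * (Nat.factorial (n + 2) : ℝ))) * u ^ n)) := by
    rw [fgAux, fgAux, ← tsum_mul_left (a := (2:ℝ))]
    exact (Summable.tsum_sub (hsum 1) ((hsum 2).mul_left 2)).symm
  rw [hL, hR]
  have hs : Summable (fun n : ℕ =>
      (1 / ((Nat.factorial n : ℝ) * (Nat.factorial (n + 1) : ℝ))) * u ^ n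
      - 2 * ((1 / ((Nat.factorial n : ℝ) * (Nat.factorial (n + 2) : ℝ))) * u ^ n)) :=
    (hsum 1).sub ((hsum 2).mul_left 2)
  rw [Summable.tsum_eq_zero_add hs]
  have h0 : (1 / ((Nat.factorial 0 : ℝ) * (Nat.factorial (0 + 1) : ℝ))) * u ^ 0
      - 2 * ((1 / ((Nat.factorial 0 : ℝ) * (Nat.factorial (0 + 2) : ℝ))) * u ^ 0) = 0 := by
    norm_num [Nat.factorial]
  rw [h0, zero_add]
  apply tsum_congr
  intro n
  have hkey : (1 / ((Nat.factorial (n+1) : ℝ) * (Nat.factorial (n + 1 + 1) : ℝ)))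
      - 2 * (1 / ((Nat.factorial (n+1) : ℝ) * (Nat.factorial (n + 1 + 2) : ℝ)))
      = 1 / ((Nat.factorial n : ℝ) * (Nat.factorial (n + 3) : ℝ)) := by
    have e2 : n + 1 + 2 = (n + 1 + 1) + 1 := by ring
    have e3 : n + 3 = (n + 1 + 1) + 1 := by ring
    have e4 : n + 1 + 1 = (n + 1) + 1 := rfl
    rw [e2, e3, e4, Nat.factorial_succ ((n+1)+1), Nat.factorial_succ (n+1), Nat.factorial_succ n]
    have h1 : (0:ℝ) < Nat.factorial n := by exact_mod_cast Nat.factorial_pos n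
    push_cast
    field_simp
    ring
  rw [← hkey]
  ring
/-- The absolutely continuous part `p(x,t)` of the Feller diffusion transition density is
smooth on `(0,∞) × (0,∞)` and satisfies the Fokker–Planck equation
`∂p/∂t = (σ²/2) ∂²(x p)/∂x²` there. -/
theorem feller_density_satisfies_fokker_planck (σ x₀ : ℝ) (hσ : 0 < σ) (hx₀ : 0 < x₀) :
    let I1 : ℝ → ℝ := fun z =>
      ∑' n : ℕ, (1 / ((Nat.factorial n : ℝ) * (Nat.factorial (n + 1) : ℝ))) *
        (z / 2) ^ (2 * n + 1)
    let p : ℝ → ℝ → ℝ := fun x t =>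
      (2 / (σ ^ 2 * t)) * Real.sqrt (x₀ / x) * Real.exp (-2 * (x + x₀) / (σ ^ 2 * t)) *
        I1 (4 * Real.sqrt (x * x₀) / (σ ^ 2 * t))
    ContDiffOn ℝ (⊤ : ℕ∞) (fun q : ℝ × ℝ => p q.1 q.2) (Set.Ioi 0 ×ˢ Set.Ioi 0) ∧
    ∀ (x t : ℝ), 0 < x → 0 < t →
      deriv (fun τ : ℝ => p x τ) t
        = (σ ^ 2 / 2) * deriv (fun y : ℝ => deriv (fun y' : ℝ => y' * p y' t) y) x := by
  intro I1 p
  have hσ2 : (0:ℝ) < σ ^ 2 := by positivity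
  set K : ℝ := 4 * x₀ / σ ^ 4 with hK
  have hKpos : 0 < K := by rw [hK]; positivity
  -- closed form of p on the positive quadrant
  have hpeq : ∀ x t : ℝ, 0 < x → 0 < t →
      p x t = K / t ^ 2 * Real.exp (-2 * (x + x₀) / (σ ^ 2 * t)) * fgAux 1 (K * x / t ^ 2) := by
    intro x t hx ht
    simp only [p, I1]
    set z : ℝ := 4 * Real.sqrt (x * x₀) / (σ ^ 2 * t) with hz
    have hI : (∑' n : ℕ, (1 / ((Nat.factorial n : ℝ) * (Nat.factorial (n + 1) : ℝ)))
          * (z / 2) ^ (2 * n + 1))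
        = (z / 2) * fgAux 1 ((z / 2) ^ 2) := by
      rw [fgAux, ← tsum_mul_left]
      apply tsum_congr
      intro n
      rw [pow_succ, pow_mul]
      ring
    rw [hI]
    have hs2 : Real.sqrt (x * x₀) ^ 2 = x * x₀ := Real.sq_sqrt (by positivity)
    have hsq : Real.sqrt (x₀ / x) * Real.sqrt (x * x₀) = x₀ := by
      rw [← Real.sqrt_mul (by positivity)]
      rw [show x₀ / x * (x * x₀) = x₀ ^ 2 by field_simp]
      exact Real.sqrt_sq hx₀.le
    have hw : (z / 2) ^ 2 = K * x / t ^ 2 := by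
      have h6 : (z / 2) ^ 2 = 4 * Real.sqrt (x * x₀) ^ 2 / ((σ ^ 2 * t) * (σ ^ 2 * t)) := by
        rw [hz]; ring
      rw [h6, hs2, hK, show σ ^ 4 = σ ^ 2 * σ ^ 2 by ring]
      field_simp
    rw [hw, hz]
    have key : 2 / (σ ^ 2 * t) * Real.sqrt (x₀ / x) * (4 * Real.sqrt (x * x₀) / (σ ^ 2 * t) / 2)
        = K / t ^ 2 := by
      have h5 : 2 / (σ ^ 2 * t) * Real.sqrt (x₀ / x) * (4 * Real.sqrt (x * x₀) / (σ ^ 2 * t) / 2)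
          = 4 * (Real.sqrt (x₀ / x) * Real.sqrt (x * x₀)) / ((σ ^ 2 * t) * (σ ^ 2 * t)) := by
        ring
      rw [h5, hsq, hK, show σ ^ 4 = σ ^ 2 * σ ^ 2 by ring]
      field_simp
    linear_combination (Real.exp (-2 * (x + x₀) / (σ ^ 2 * t)) * fgAux 1 (K * x / t ^ 2)) * key
  constructor
  · -- smoothness
    have hmain : ContDiffOn ℝ (⊤ : ℕ∞) (fun q : ℝ × ℝ =>
        K / q.2 ^ 2 * Real.exp (-2 * (q.1 + x₀) / (σ ^ 2 * q.2)) * fgAux 1 (K * q.1 / q.2 ^ 2))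
        (Set.Ioi 0 ×ˢ Set.Ioi 0) := by
      have hne : ∀ q : ℝ × ℝ, q ∈ Set.Ioi (0:ℝ) ×ˢ Set.Ioi (0:ℝ) → q.2 ≠ 0 := by
        intro q hq
        exact ne_of_gt (Set.mem_prod.mp hq).2
      have hfst : ContDiffOn ℝ (⊤ : ℕ∞) (fun q : ℝ × ℝ => q.1) (Set.Ioi 0 ×ˢ Set.Ioi 0) :=
        contDiff_fst.contDiffOn
      have hsnd : ContDiffOn ℝ (⊤ : ℕ∞) (fun q : ℝ × ℝ => q.2) (Set.Ioi 0 ×ˢ Set.Ioi 0) :=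
        contDiff_snd.contDiffOn
      have hA : ContDiffOn ℝ (⊤ : ℕ∞) (fun q : ℝ × ℝ => K / q.2 ^ 2) (Set.Ioi 0 ×ˢ Set.Ioi 0) :=
        contDiffOn_const.div (hsnd.pow 2) (fun q hq => pow_ne_zero 2 (hne q hq))
      have hBin : ContDiffOn ℝ (⊤ : ℕ∞) (fun q : ℝ × ℝ => -2 * (q.1 + x₀) / (σ ^ 2 * q.2))
          (Set.Ioi 0 ×ˢ Set.Ioi 0) := by
        apply ContDiffOn.div
        · exact contDiffOn_const.mul (hfst.add contDiffOn_const)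
        · exact contDiffOn_const.mul hsnd
        · exact fun q hq => mul_ne_zero (ne_of_gt hσ2) (hne q hq)
      have hB := Real.contDiff_exp.comp_contDiffOn hBin
      have hCin : ContDiffOn ℝ (⊤ : ℕ∞) (fun q : ℝ × ℝ => K * q.1 / q.2 ^ 2)
          (Set.Ioi 0 ×ˢ Set.Ioi 0) :=
        (contDiffOn_const.mul hfst).div (hsnd.pow 2) (fun q hq => pow_ne_zero 2 (hne q hq))
      have hC := (contDiff_fgAux 1).comp_contDiffOn hCin
      exact (hA.mul hB).mul hC
    apply hmain.congr
    intro q hq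
    have hq' := Set.mem_prod.mp hq
    exact hpeq q.1 q.2 hq'.1 hq'.2
  · -- the Fokker-Planck equation
    intro x t hx ht
    have htne : t ≠ 0 := ht.ne'
    -- time derivative
    have hta : HasDerivAt (fun τ : ℝ => K / τ ^ 2)
        ((0 * t ^ 2 - K * (2 * t ^ (2-1))) / (t ^ 2) ^ 2) t :=
      (hasDerivAt_const t K).div (hasDerivAt_pow 2 t) (pow_ne_zero 2 htne)
    have htb_in : HasDerivAt (fun τ : ℝ => -2 * (x + x₀) / (σ ^ 2 * τ))
        ((0 * (σ ^ 2 * t) - -2 * (x + x₀) * (0 * t + σ ^ 2 * 1)) / (σ ^ 2 * t) ^ 2) t :=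
      (hasDerivAt_const t (-2 * (x + x₀))).div
        ((hasDerivAt_const t (σ ^ 2)).mul (hasDerivAt_id t)) (mul_ne_zero (ne_of_gt hσ2) htne)
    have htb := htb_in.exp
    have htc_in : HasDerivAt (fun τ : ℝ => K * x / τ ^ 2)
        ((0 * t ^ 2 - K * x * (2 * t ^ (2-1))) / (t ^ 2) ^ 2) t :=
      (hasDerivAt_const t (K * x)).div (hasDerivAt_pow 2 t) (pow_ne_zero 2 htne)
    have htc : HasDerivAt (fun τ : ℝ => fgAux 1 (K * x / τ ^ 2))
        (fgAux 2 (K * x / t ^ 2) * ((0 * t ^ 2 - K * x * (2 * t ^ (2-1))) / (t ^ 2) ^ 2)) t :=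
      by have := (hasDerivAt_fgAux 1 (K * x / t ^ 2)).comp t htc_in; exact this
    have htBig := (hta.mul htb).mul htc
    have hev_t : (fun τ : ℝ => p x τ) =ᶠ[nhds t]
        (fun τ : ℝ => K / τ ^ 2 * Real.exp (-2 * (x + x₀) / (σ ^ 2 * τ))
          * fgAux 1 (K * x / τ ^ 2)) := by
      filter_upwards [isOpen_Ioi.mem_nhds ht] with τ hτ
      exact hpeq x τ hx hτ
    have hderiv_t : deriv (fun τ : ℝ => p x τ) t
        = ((0 * t ^ 2 - K * (2 * t ^ (2-1))) / (t ^ 2) ^ 2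
              * Real.exp (-2 * (x + x₀) / (σ ^ 2 * t))
            + K / t ^ 2 * (Real.exp (-2 * (x + x₀) / (σ ^ 2 * t))
              * ((0 * (σ ^ 2 * t) - -2 * (x + x₀) * (0 * t + σ ^ 2 * 1)) / (σ ^ 2 * t) ^ 2)))
            * fgAux 1 (K * x / t ^ 2)
          + K / t ^ 2 * Real.exp (-2 * (x + x₀) / (σ ^ 2 * t))
            * (fgAux 2 (K * x / t ^ 2) * ((0 * t ^ 2 - K * x * (2 * t ^ (2-1))) / (t ^ 2) ^ 2)) := by
      rw [hev_t.deriv_eq]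
      exact htBig.deriv
    -- first x-derivative of y ↦ y * p(y,t), in closed form, valid for every y
    have hFy : ∀ y : ℝ, HasDerivAt
        (fun y' : ℝ => y' * (K / t ^ 2 * Real.exp (-2 * (y' + x₀) / (σ ^ 2 * t))
          * fgAux 1 (K * y' / t ^ 2)))
        (K / t ^ 2 * Real.exp (-2 * (y + x₀) / (σ ^ 2 * t))
          * ((1 - 2 * y / (σ ^ 2 * t)) * fgAux 1 (K * y / t ^ 2)
            + K * y / t ^ 2 * fgAux 2 (K * y / t ^ 2))) y := by
      intro y
      have hein : HasDerivAt (fun y' : ℝ => -2 * (y' + x₀) / (σ ^ 2 * t)) (-2 / (σ ^ 2 * t)) y := by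
        have h := (((hasDerivAt_id' y).add_const x₀).const_mul (-2)).div_const (σ ^ 2 * t)
        exact h.congr_deriv (by ring)
      have he := hein.exp
      have hlin : HasDerivAt (fun y' : ℝ => K * y' / t ^ 2) (K / t ^ 2) y := by
        have h := ((hasDerivAt_id' y).const_mul K).div_const (t ^ 2)
        exact h.congr_deriv (by ring)
      have hgy : HasDerivAt (fun y' : ℝ => fgAux 1 (K * y' / t ^ 2))
          (fgAux 2 (K * y / t ^ 2) * (K / t ^ 2)) y := (hasDerivAt_fgAux 1 _).comp y hlin
      have hall := (hasDerivAt_id' y).mul ((he.const_mul (K / t ^ 2)).mul hgy)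
      exact hall.congr_deriv (by simp only [Pi.mul_apply]; ring)
    -- second x-derivative
    have hein : HasDerivAt (fun y : ℝ => -2 * (y + x₀) / (σ ^ 2 * t)) (-2 / (σ ^ 2 * t)) x := by
      have h := (((hasDerivAt_id' x).add_const x₀).const_mul (-2)).div_const (σ ^ 2 * t)
      exact h.congr_deriv (by ring)
    have hex := hein.exp
    have hlin : HasDerivAt (fun y : ℝ => K * y / t ^ 2) (K / t ^ 2) x := by
      have h := ((hasDerivAt_id' x).const_mul K).div_const (t ^ 2)
      exact h.congr_deriv (by ring)
    have hgy1 : HasDerivAt (fun y : ℝ => fgAux 1 (K * y / t ^ 2))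
        (fgAux 2 (K * x / t ^ 2) * (K / t ^ 2)) x := (hasDerivAt_fgAux 1 _).comp x hlin
    have hgy2 : HasDerivAt (fun y : ℝ => fgAux 2 (K * y / t ^ 2))
        (fgAux 3 (K * x / t ^ 2) * (K / t ^ 2)) x := (hasDerivAt_fgAux 2 _).comp x hlin
    have hterm : HasDerivAt (fun y : ℝ => 1 - 2 * y / (σ ^ 2 * t)) (-(2 / (σ ^ 2 * t))) x := by
      have h := (((hasDerivAt_id' x).const_mul 2).div_const (σ ^ 2 * t)).const_sub 1
      exact h.congr_deriv (by ring)
    have hH := (hterm.mul hgy1).add (hlin.mul hgy2)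
    have hF2 := (hex.const_mul (K / t ^ 2)).mul hH
    -- identify the two derivatives
    have hev_x : (fun y' : ℝ => y' * p y' t) =ᶠ[nhds x]
        (fun y' : ℝ => y' * (K / t ^ 2 * Real.exp (-2 * (y' + x₀) / (σ ^ 2 * t))
          * fgAux 1 (K * y' / t ^ 2))) := by
      filter_upwards [isOpen_Ioi.mem_nhds hx] with y hy
      rw [hpeq y t hy ht]
    have hd1 : deriv (fun y' : ℝ => y' * p y' t) =ᶠ[nhds x]
        (fun y : ℝ => K / t ^ 2 * Real.exp (-2 * (y + x₀) / (σ ^ 2 * t))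
          * ((1 - 2 * y / (σ ^ 2 * t)) * fgAux 1 (K * y / t ^ 2)
            + K * y / t ^ 2 * fgAux 2 (K * y / t ^ 2))) := by
      have h1 := hev_x.deriv
      have h2 : deriv (fun y' : ℝ => y' * (K / t ^ 2 * Real.exp (-2 * (y' + x₀) / (σ ^ 2 * t))
          * fgAux 1 (K * y' / t ^ 2)))
          = (fun y : ℝ => K / t ^ 2 * Real.exp (-2 * (y + x₀) / (σ ^ 2 * t))
          * ((1 - 2 * y / (σ ^ 2 * t)) * fgAux 1 (K * y / t ^ 2)
            + K * y / t ^ 2 * fgAux 2 (K * y / t ^ 2))) :=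
        funext fun y => (hFy y).deriv
      rw [h2] at h1
      exact h1
    have hsecond : deriv (fun y : ℝ => deriv (fun y' : ℝ => y' * p y' t) y) x
        = K / t ^ 2 * (Real.exp (-2 * (x + x₀) / (σ ^ 2 * t)) * (-2 / (σ ^ 2 * t)))
            * ((1 - 2 * x / (σ ^ 2 * t)) * fgAux 1 (K * x / t ^ 2)
              + K * x / t ^ 2 * fgAux 2 (K * x / t ^ 2))
          + K / t ^ 2 * Real.exp (-2 * (x + x₀) / (σ ^ 2 * t))
            * ((-(2 / (σ ^ 2 * t)) * fgAux 1 (K * x / t ^ 2)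
                + (1 - 2 * x / (σ ^ 2 * t)) * (fgAux 2 (K * x / t ^ 2) * (K / t ^ 2)))
              + (K / t ^ 2 * fgAux 2 (K * x / t ^ 2)
                + K * x / t ^ 2 * (fgAux 3 (K * x / t ^ 2) * (K / t ^ 2)))) := by
      rw [hd1.deriv_eq]
      exact hF2.deriv
    rw [hderiv_t, hsecond]
    -- final algebra, using the ODE for the Bessel-type series
    have hode := fgAux_ode (K * x / t ^ 2)
    have hG2eq : fgAux 3 (K * x / t ^ 2)
        = (fgAux 1 (K * x / t ^ 2) - 2 * fgAux 2 (K * x / t ^ 2)) / (K * x / t ^ 2) := by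
      rw [eq_div_iff (by positivity)]
      linear_combination hode
    rw [hG2eq, hK]
    field_simp
    ring
end

section
/- Fix σ > 0, x₀ > 0 and t > 0, and define p(x) = (2/(σ²t)) · √(x₀/x) · exp( −2(x+x₀)/(σ²t) ) · I₁( 4√(x·x₀)/(σ²t) ) for x > 0, where I₁(z) = ∑_{n=0}^{∞} (1/(n!(n+1)!))(z/2)^{2n+1}. Then the function x ↦ x·p(x) is integrable on (0,∞) and ∫₀^∞ x · p(x) dx = x₀. -/
open MeasureTheory Set

lemma aux_int (c : ℝ) (hc : 0 < c) (n : ℕ) :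
    IntegrableOn (fun x : ℝ => x ^ (n + 1) * Real.exp (-(c * x))) (Ioi 0) := by
  have h := integrableOn_rpow_mul_exp_neg_mul_rpow
    (s := (n : ℝ) + 1) (p := 1) (b := c)
    (by linarith [Nat.cast_nonneg (α := ℝ) n]) zero_lt_one hc
  refine h.congr_fun (fun x hx => ?_) measurableSet_Ioi
  beta_reduce
  rw [Real.rpow_one, neg_mul, ← Real.rpow_natCast x (n + 1)]
  push_cast
  ring_nf

lemma aux_val (c : ℝ) (hc : 0 < c) (n : ℕ) :
    ∫ x in Ioi (0:ℝ), x ^ (n + 1) * Real.exp (-(c * x))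
      = ((n + 1).factorial : ℝ) / c ^ (n + 2) := by
  have h := Real.integral_rpow_mul_exp_neg_mul_Ioi
    (a := (n : ℝ) + 2) (r := c) (by positivity) hc
  rw [show ((n:ℝ) + 2 - 1) = (n:ℝ) + 1 by ring] at h
  have h2 : ∫ x in Ioi (0:ℝ), x ^ (n + 1) * Real.exp (-(c * x))
      = ∫ x in Ioi (0:ℝ), x ^ ((n:ℝ) + 1) * Real.exp (-(c * x)) := by
    refine setIntegral_congr_fun measurableSet_Ioi (fun x hx => ?_)
    rw [← Real.rpow_natCast x (n + 1)]
    push_cast; ring_nf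
  rw [h2, h, show ((n:ℝ) + 2) = ((n + 1 : ℕ) : ℝ) + 1 by push_cast; ring,
    Real.Gamma_nat_eq_factorial, show ((n + 1 : ℕ) : ℝ) + 1 = ((n + 2 : ℕ) : ℝ) by push_cast; ring,
    Real.rpow_natCast, one_div, inv_pow]
  field_simp

/-- The martingale property of the Feller diffusion: the mean of the absolutely
continuous part of the transition density is `x₀`, i.e. `∫₀^∞ x p(x) dx = x₀`. -/
theorem feller_density_mean (σ x₀ t : ℝ) (hσ : 0 < σ) (hx₀ : 0 < x₀) (ht : 0 < t) :
    let I1 : ℝ → ℝ := fun z =>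
      ∑' n : ℕ, (1 / ((Nat.factorial n : ℝ) * (Nat.factorial (n + 1) : ℝ))) *
        (z / 2) ^ (2 * n + 1)
    let p : ℝ → ℝ := fun x =>
      (2 / (σ ^ 2 * t)) * Real.sqrt (x₀ / x) * Real.exp (-2 * (x + x₀) / (σ ^ 2 * t)) *
        I1 (4 * Real.sqrt (x * x₀) / (σ ^ 2 * t))
    IntegrableOn (fun x : ℝ => x * p x) (Set.Ioi 0) ∧
    ∫ x in Set.Ioi (0 : ℝ), x * p x = x₀ := by
  intro I1 p
  have hσt : 0 < σ ^ 2 * t := by positivity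
  set c : ℝ := 2 / (σ ^ 2 * t) with hc
  have hcpos : 0 < c := by positivity
  clear_value c
  have hfac : ∀ m : ℕ, (0:ℝ) < m.factorial := fun m => by exact_mod_cast m.factorial_pos
  -- the terms of the expanded series
  set A : ℕ → ℝ := fun n =>
    c ^ (2 * n + 2) * x₀ ^ (n + 1) * Real.exp (-(c * x₀)) /
      ((n.factorial : ℝ) * ((n + 1).factorial : ℝ)) with hA
  set F : ℕ → ℝ → ℝ := fun n x => A n * (x ^ (n + 1) * Real.exp (-(c * x))) with hF
  have hApos : ∀ n, 0 < A n := fun n =>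
    div_pos (by positivity) (mul_pos (hfac n) (hfac (n + 1)))
  -- pointwise expansion
  have heq : ∀ x ∈ Ioi (0:ℝ), x * p x = ∑' n, F n x := by
    intro x hx
    have hx0 : (0:ℝ) < x := hx
    have hs : Real.sqrt (x * x₀) ^ 2 = x * x₀ := Real.sq_sqrt (by positivity)
    have hs2 : Real.sqrt (x₀ / x) * Real.sqrt (x * x₀) = x₀ := by
      rw [← Real.sqrt_mul (by positivity),
        show x₀ / x * (x * x₀) = x₀ ^ 2 by field_simp, Real.sqrt_sq hx₀.le]
    have harg : 4 * Real.sqrt (x * x₀) / (σ ^ 2 * t) / 2 = c * Real.sqrt (x * x₀) := by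
      rw [hc]; field_simp; ring
    have hexp : Real.exp (-2 * (x + x₀) / (σ ^ 2 * t))
        = Real.exp (-(c * x₀)) * Real.exp (-(c * x)) := by
      rw [← Real.exp_add]; congr 1; rw [hc]; field_simp; ring
    calc x * p x
        = (x * (c * Real.sqrt (x₀ / x) * Real.exp (-2 * (x + x₀) / (σ ^ 2 * t)))) *
            I1 (4 * Real.sqrt (x * x₀) / (σ ^ 2 * t)) := by
          simp only [p]; rw [← hc]; ring
      _ = ∑' n, (x * (c * Real.sqrt (x₀ / x) * Real.exp (-2 * (x + x₀) / (σ ^ 2 * t)))) *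
            ((1 / ((n.factorial : ℝ) * ((n + 1).factorial : ℝ))) *
              (4 * Real.sqrt (x * x₀) / (σ ^ 2 * t) / 2) ^ (2 * n + 1)) := by
          simp only [I1]; exact (tsum_mul_left).symm
      _ = ∑' n, F n x := by
          refine tsum_congr fun n => ?_
          rw [harg, hexp, mul_pow,
            show Real.sqrt (x * x₀) ^ (2 * n + 1)
              = (x * x₀) ^ n * Real.sqrt (x * x₀) by rw [pow_succ, pow_mul, hs]]
          simp only [hF, hA]
          linear_combination (x * c * Real.exp (-(c * x₀)) * Real.exp (-(c * x)) *
            c ^ (2 * n + 1) * (x * x₀) ^ n /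
            ((n.factorial : ℝ) * ((n + 1).factorial : ℝ))) * hs2
  -- pointwise summability (for every real x)
  have hFsum : ∀ x : ℝ, Summable fun n => F n x := by
    intro x
    refine Summable.of_norm_bounded
      (g := fun n => (c ^ 2 * x₀ * Real.exp (-(c * x₀)) * Real.exp (-(c * x)) * |x|) *
        (|c ^ 2 * x₀ * x| ^ n / n.factorial))
      ((Real.summable_pow_div_factorial _).mul_left _) (fun n => ?_)
    have h1 : ‖F n x‖ = A n * (|x| ^ (n + 1) * Real.exp (-(c * x))) := by
      simp only [hF, Real.norm_eq_abs, abs_mul, abs_pow,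
        abs_of_nonneg (hApos n).le, abs_of_nonneg (Real.exp_pos _).le]
    have h2 : A n * (|x| ^ (n + 1) * Real.exp (-(c * x)))
        = ((c ^ 2 * x₀ * Real.exp (-(c * x₀)) * Real.exp (-(c * x)) * |x|) *
            (|c ^ 2 * x₀ * x| ^ n / n.factorial)) * (1 / ((n + 1).factorial : ℝ)) := by
      simp only [hA]
      rw [abs_mul, abs_mul, abs_of_nonneg (by positivity : (0:ℝ) ≤ c ^ 2),
        abs_of_nonneg hx₀.le,
        show 2 * n + 2 = n + n + 2 by omega]
      field_simp
      ring
    rw [h1, h2]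
    refine mul_le_of_le_one_right (by positivity) ?_
    rw [div_le_one (hfac _)]
    exact_mod_cast Nat.succ_le_of_lt (n + 1).factorial_pos
  -- measurability of each term and of the sum
  have hFmeas : ∀ n, Measurable (F n) := by
    intro n
    have : Continuous (F n) := by
      simp only [hF]; fun_prop
    exact this.measurable
  have hGmeas : Measurable fun x => ∑' n, F n x := by
    refine measurable_of_tendsto_metrizable
      (f := fun N x => ∑ n ∈ Finset.range N, F n x)
      (fun N => Finset.measurable_sum _ fun n _ => hFmeas n) ?_
    rw [tendsto_pi_nhds]
    exact fun x => (hFsum x).hasSum.tendsto_sum_nat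
  -- integrability and value of each term
  have hFint : ∀ n, IntegrableOn (F n) (Ioi 0) := fun n =>
    ((aux_int c hcpos n).const_mul (A n) : _)
  have hFval : ∀ n, ∫ x in Ioi (0:ℝ), F n x
      = Real.exp (-(c * x₀)) * x₀ * ((c * x₀) ^ n / n.factorial) := by
    intro n
    simp only [hF]
    rw [MeasureTheory.integral_const_mul, aux_val c hcpos n]
    simp only [hA]
    rw [show 2 * n + 2 = n + (n + 2) by omega, pow_add, mul_pow]
    field_simp
    ring
  have hF0 : ∀ n, ∀ x ∈ Ioi (0:ℝ), 0 ≤ F n x := by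
    intro n x hx
    have hx0 : (0:ℝ) < x := hx
    simp only [hF]
    positivity
  -- summability of the integrals
  have hsumv : Summable fun n => ∫ x in Ioi (0:ℝ), F n x := by
    rw [funext hFval]
    exact (Real.summable_pow_div_factorial _).mul_left _
  have hnorm : ∀ n, (∫ x in Ioi (0:ℝ), ‖F n x‖) = ∫ x in Ioi (0:ℝ), F n x := fun n =>
    setIntegral_congr_fun measurableSet_Ioi fun x hx => Real.norm_of_nonneg (hF0 n x hx)
  -- total value of the sum of integrals
  have htsumv : ∑' n, ∫ x in Ioi (0:ℝ), F n x = x₀ := by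
    rw [funext hFval, tsum_mul_left,
      show (∑' n : ℕ, (c * x₀) ^ n / (n.factorial : ℝ)) = Real.exp (c * x₀) by
        rw [Real.exp_eq_exp_ℝ, NormedSpace.exp_eq_tsum_div]]
    have h1 : Real.exp (-(c * x₀)) * Real.exp (c * x₀) = 1 := by
      rw [← Real.exp_add]; simp
    linear_combination x₀ * h1
  -- the integrability part
  have haes : AEStronglyMeasurable (fun x : ℝ => x * p x) (volume.restrict (Ioi 0)) := by
    refine hGmeas.aestronglyMeasurable.congr ?_
    filter_upwards [ae_restrict_mem measurableSet_Ioi] with x hx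
    exact (heq x hx).symm
  have hlin : ∫⁻ x in Ioi (0:ℝ), (‖x * p x‖₊ : ENNReal) = ENNReal.ofReal x₀ := by
    calc ∫⁻ x in Ioi (0:ℝ), (‖x * p x‖₊ : ENNReal)
        = ∫⁻ x in Ioi (0:ℝ), ∑' n, ENNReal.ofReal (F n x) := by
          refine lintegral_congr_ae ?_
          filter_upwards [ae_restrict_mem measurableSet_Ioi] with x hx
          rw [heq x hx, ← enorm_eq_nnnorm, Real.enorm_eq_ofReal (tsum_nonneg fun n => hF0 n x hx),
            ENNReal.ofReal_tsum_of_nonneg (fun n => hF0 n x hx) (hFsum x)]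
      _ = ∑' n, ∫⁻ x in Ioi (0:ℝ), ENNReal.ofReal (F n x) :=
          lintegral_tsum fun n => ((hFmeas n).ennreal_ofReal).aemeasurable
      _ = ∑' n, ENNReal.ofReal (∫ x in Ioi (0:ℝ), F n x) := by
          refine tsum_congr fun n => ?_
          refine (ofReal_integral_eq_lintegral_ofReal (hFint n) ?_).symm
          filter_upwards [ae_restrict_mem measurableSet_Ioi] with x hx
          exact hF0 n x hx
      _ = ENNReal.ofReal (∑' n, ∫ x in Ioi (0:ℝ), F n x) :=
          (ENNReal.ofReal_tsum_of_nonneg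
            (fun n => setIntegral_nonneg measurableSet_Ioi fun x hx => hF0 n x hx) hsumv).symm
      _ = ENNReal.ofReal x₀ := by rw [htsumv]
  refine ⟨⟨haes, ?_⟩, ?_⟩
  · show (∫⁻ x in Ioi (0:ℝ), (‖x * p x‖₊ : ENNReal)) < ⊤
    rw [hlin]
    exact ENNReal.ofReal_lt_top
  · rw [setIntegral_congr_fun measurableSet_Ioi heq,
      ← integral_tsum_of_summable_integral_norm (fun n => hFint n)
        ((summable_congr hnorm).2 hsumv), htsumv]
end
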